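/- arXiv:2407.01744 — 6 statements merged into one kernel-verified Lean document; each statement's English description precedes it below -/
import Mathlib

section
/- Let C ⊂ ℙ⁴ be an irreducible reduced curve of degree b, and let S ⊂ ℙ⁴ be a plane (a linear subspace of dimension 2) not containing C. If the set-theoretic intersection C ∩ S consists of exactly b points, then C and S lie together in a common hyperplane of ℙ⁴. -/
noncomputable section

/-- The underlying vector space of ℙ⁴ over ℂ. -/
abbrev V5 : Type := Fin 5 → ℂ

/-- ℙ⁴ over ℂ. -/
abbrev P4 : Type := Projectivization ℂ V5

/-- The set of points of ℙ⁴ lying in the linear subspace `W ⊆ ℂ⁵`. -/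
def subPts (W : Submodule ℂ V5) : Set P4 := {x | x.rep ∈ W}

/-- A subset of ℙ⁴ is algebraic if it is the common zero locus of a family of
homogeneous polynomials. -/
def IsAlgebraicSet (C : Set P4) : Prop :=
  ∃ I : Set (MvPolynomial (Fin 5) ℂ),
    (∀ f ∈ I, ∃ n, f.IsHomogeneous n) ∧
    C = {x : P4 | ∀ f ∈ I, MvPolynomial.eval x.rep f = 0}

/-- An irreducible (reduced) algebraic subset of ℙ⁴. -/
def IsIrredAlgSet (C : Set P4) : Prop :=
  IsAlgebraicSet C ∧ C.Nonempty ∧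
    ∀ C₁ C₂ : Set P4, IsAlgebraicSet C₁ → IsAlgebraicSet C₂ → C ⊆ C₁ ∪ C₂ →
      C ⊆ C₁ ∨ C ⊆ C₂

/-- `C` is a curve of degree `b` in ℙ⁴. -/
def IsCurveOfDegree (C : Set P4) (b : ℕ) : Prop :=
  C.Infinite ∧
  (∀ W : Submodule ℂ V5, Module.finrank ℂ W = 4 → ¬ C ⊆ subPts W →
      (C ∩ subPts W).Finite ∧ (C ∩ subPts W).ncard ≤ b) ∧
  (∃ W : Submodule ℂ V5, Module.finrank ℂ W = 4 ∧ ¬ C ⊆ subPts W ∧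
      (C ∩ subPts W).ncard = b)

/-- Let `C ⊂ ℙ⁴` be an irreducible reduced curve of degree `b`, and let `Λ` be a plane
(projective linear subspace of dimension 2, i.e. a 3-dimensional linear subspace of ℂ⁵)
not containing `C`.  If the set-theoretic intersection `C ∩ Λ` consists of exactly `b`
points, then `C` and `Λ` lie together in a common hyperplane of ℙ⁴. -/
theorem stmt_5 (b : ℕ) (C : Set P4)
    (hC : IsCurveOfDegree C b) (hCirr : IsIrredAlgSet C)
    (Λ : Submodule ℂ V5) (hΛ : Module.finrank ℂ Λ = 3)
    (hCΛ : ¬ C ⊆ subPts Λ)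
    (hfin : (C ∩ subPts Λ).Finite) (hcard : (C ∩ subPts Λ).ncard = b) :
    ∃ H : Submodule ℂ V5, Module.finrank ℂ H = 4 ∧ Λ ≤ H ∧ C ⊆ subPts H := by
  rw [Set.not_subset] at hCΛ
  obtain ⟨P, hPC, hPΛ⟩ := hCΛ
  have hv : P.rep ∉ Λ := hPΛ
  set H : Submodule ℂ V5 := Λ ⊔ (ℂ ∙ P.rep) with hHdef
  have hinf : Λ ⊓ (ℂ ∙ P.rep) = ⊥ := by
    rw [Submodule.eq_bot_iff]
    rintro x ⟨hxΛ, hxs⟩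
    obtain ⟨c, rfl⟩ := Submodule.mem_span_singleton.mp hxs
    rcases eq_or_ne c 0 with rfl | hc
    · simp
    · exact absurd (by simpa [smul_smul, inv_mul_cancel₀ hc] using Λ.smul_mem c⁻¹ hxΛ) hv
  have hH4 : Module.finrank ℂ H = 4 := by
    have := Submodule.finrank_sup_add_finrank_inf_eq Λ (ℂ ∙ P.rep)
    rw [hinf, finrank_bot, finrank_span_singleton (Projectivization.rep_nonzero P), hΛ] at this
    rw [hHdef]
    omega
  refine ⟨H, hH4, le_sup_left, ?_⟩
  by_contra hnot
  obtain ⟨hfinH, hcardH⟩ := hC.2.1 H hH4 hnot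
  have hsub : insert P (C ∩ subPts Λ) ⊆ C ∩ subPts H := by
    intro x hx
    rcases Set.mem_insert_iff.mp hx with rfl | ⟨hxC, hxΛ⟩
    · exact ⟨hPC, Submodule.mem_sup_right (Submodule.mem_span_singleton_self _)⟩
    · exact ⟨hxC, Submodule.mem_sup_left hxΛ⟩
  have h1 : (insert P (C ∩ subPts Λ)).ncard = b + 1 := by
    rw [Set.ncard_insert_of_notMem (fun h => hPΛ h.2) hfin, hcard]
  have h2 := Set.ncard_le_ncard hsub hfinH
  omega
end
end

section
/- Let π₁, …, π_d (d ≥ 3) be planes in ℙ⁴ such that the union of any two of them spans ℙ⁴ (in particular any two meet in exactly one point). Suppose there exist two distinct planes Π₁, Π₂ in ℙ⁴ such that π_i ∩ Π_j is a line ℓ_{ij} for all i, j, and the lines ℓ_{ij} are pairwise distinct. Then the planes π₁, …, π_d have a common point. -/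
noncomputable section

/-- Let `π₁, …, π_d` (`d ≥ 3`) be planes in ℙ⁴ such that the union of any two of them
spans ℙ⁴.  Suppose there exist two distinct planes `Π₁, Π₂` such that `π_i ∩ Π_j` is a
line `ℓ_{ij}` for all `i, j`, and the lines `ℓ_{ij}` are pairwise distinct.  Then the
planes `π₁, …, π_d` have a common point. -/
theorem stmt_6 (d : ℕ) (hd : 3 ≤ d)
    (π : Fin d → Submodule ℂ V5) (hπ : ∀ i, Module.finrank ℂ (π i) = 3)
    (hspan : ∀ i j, i ≠ j → π i ⊔ π j = ⊤)
    (Pl : Fin 2 → Submodule ℂ V5) (hPl : ∀ j, Module.finrank ℂ (Pl j) = 3)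
    (hPlne : Pl 0 ≠ Pl 1)
    (hline : ∀ i j, Module.finrank ℂ ↥(π i ⊓ Pl j) = 2)
    (hdist : Function.Injective (fun p : Fin d × Fin 2 => π p.1 ⊓ Pl p.2)) :
    ∃ v : V5, v ≠ 0 ∧ ∀ i, v ∈ π i := by
  have hV : Module.finrank ℂ V5 = 5 := by
    simp [V5]
  -- lines with distinct index pairs are distinct
  have hldist : ∀ (i k : Fin d) (j j' : Fin 2), (i, j) ≠ (k, j') →
      π i ⊓ Pl j ≠ π k ⊓ Pl j' := by
    intro i k j j' hne h
    exact hne (hdist (show (fun p : Fin d × Fin 2 => π p.1 ⊓ Pl p.2) (i, j)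
      = (fun p : Fin d × Fin 2 => π p.1 ⊓ Pl p.2) (k, j') from h))
  -- intersections of two of the planes π are 1-dimensional
  have hA : ∀ i k : Fin d, i ≠ k → Module.finrank ℂ ↥(π i ⊓ π k) = 1 := by
    intro i k hik
    have h := Submodule.finrank_sup_add_finrank_inf_eq (π i) (π k)
    rw [hspan i k hik, finrank_top, hV, hπ i, hπ k] at h
    omega
  -- π i ⊓ π k lies inside each plane Pl j
  have hB : ∀ (i k : Fin d) (j : Fin 2), i ≠ k → π i ⊓ π k ≤ Pl j := by
    intro i k j hik
    have hne : π i ⊓ Pl j ≠ π k ⊓ Pl j := hldist i k j j (by simp [hik])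
    have hsum := Submodule.finrank_sup_add_finrank_inf_eq (π i ⊓ Pl j) (π k ⊓ Pl j)
    rw [hline i j, hline k j] at hsum
    have hsuple : (π i ⊓ Pl j) ⊔ (π k ⊓ Pl j) ≤ Pl j :=
      sup_le inf_le_right inf_le_right
    have hsupfr : Module.finrank ℂ ↥((π i ⊓ Pl j) ⊔ (π k ⊓ Pl j)) ≤ 3 := by
      have := Submodule.finrank_mono hsuple
      rw [hPl j] at this
      exact this
    have hinfle : (π i ⊓ Pl j) ⊓ (π k ⊓ Pl j) ≤ π i ⊓ Pl j := inf_le_left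
    have hinffr : Module.finrank ℂ ↥((π i ⊓ Pl j) ⊓ (π k ⊓ Pl j)) ≠ 2 := by
      intro h2
      have e1 : (π i ⊓ Pl j) ⊓ (π k ⊓ Pl j) = π i ⊓ Pl j :=
        Submodule.eq_of_le_of_finrank_eq hinfle (by rw [h2, hline i j])
      have e2 : (π i ⊓ Pl j) ⊓ (π k ⊓ Pl j) = π k ⊓ Pl j :=
        Submodule.eq_of_le_of_finrank_eq inf_le_right (by rw [h2, hline k j])
      exact hne (e1 ▸ e2)
    have hinfle2 : Module.finrank ℂ ↥((π i ⊓ Pl j) ⊓ (π k ⊓ Pl j)) ≤ 2 := by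
      have := Submodule.finrank_mono hinfle
      rw [hline i j] at this; exact this
    have hinf1 : Module.finrank ℂ ↥((π i ⊓ Pl j) ⊓ (π k ⊓ Pl j)) = 1 := by omega
    have hle : (π i ⊓ Pl j) ⊓ (π k ⊓ Pl j) ≤ π i ⊓ π k :=
      le_inf (le_trans inf_le_left inf_le_left) (le_trans inf_le_right inf_le_left)
    have heq : (π i ⊓ Pl j) ⊓ (π k ⊓ Pl j) = π i ⊓ π k :=
      Submodule.eq_of_le_of_finrank_eq hle (by rw [hinf1, hA i k hik])
    rw [← heq]
    exact le_trans inf_le_left inf_le_right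
  -- the intersection of the two planes Pl has dimension at most 2
  have hC : Module.finrank ℂ ↥(Pl 0 ⊓ Pl 1) ≤ 2 := by
    have hsum := Submodule.finrank_sup_add_finrank_inf_eq (Pl 0) (Pl 1)
    rw [hPl 0, hPl 1] at hsum
    have hfr : Module.finrank ℂ ↥(Pl 0 ⊔ Pl 1) ≠ 3 := by
      intro h3
      have e1 : Pl 0 = Pl 0 ⊔ Pl 1 :=
        Submodule.eq_of_le_of_finrank_eq le_sup_left (by rw [h3, hPl 0])
      have e2 : Pl 1 = Pl 0 ⊔ Pl 1 :=
        Submodule.eq_of_le_of_finrank_eq le_sup_right (by rw [h3, hPl 1])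
      exact hPlne (e1.trans e2.symm)
    have hge : 3 ≤ Module.finrank ℂ ↥(Pl 0 ⊔ Pl 1) := by
      have := Submodule.finrank_mono (le_sup_left : Pl 0 ≤ Pl 0 ⊔ Pl 1)
      rw [hPl 0] at this; exact this
    omega
  -- indices
  set i0 : Fin d := ⟨0, by omega⟩ with hi0
  set i1 : Fin d := ⟨1, by omega⟩ with hi1
  have hne01 : i0 ≠ i1 := by simp [hi0, hi1, Fin.ext_iff]
  -- all intersection points π i0 ⊓ π m coincide
  have hD : ∀ m : Fin d, m ≠ i0 → π i0 ⊓ π m = π i0 ⊓ π i1 := by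
    intro m hm
    by_contra hne
    have hm0 : i0 ≠ m := fun h => hm h.symm
    -- the two distinct points span a 2-dim space
    have hsum := Submodule.finrank_sup_add_finrank_inf_eq (π i0 ⊓ π m) (π i0 ⊓ π i1)
    rw [hA i0 m hm0, hA i0 i1 hne01] at hsum
    have hinffr : Module.finrank ℂ ↥((π i0 ⊓ π m) ⊓ (π i0 ⊓ π i1)) ≠ 1 := by
      intro h1
      have e1 : (π i0 ⊓ π m) ⊓ (π i0 ⊓ π i1) = π i0 ⊓ π m :=
        Submodule.eq_of_le_of_finrank_eq inf_le_left (by rw [h1, hA i0 m hm0])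
      have e2 : (π i0 ⊓ π m) ⊓ (π i0 ⊓ π i1) = π i0 ⊓ π i1 :=
        Submodule.eq_of_le_of_finrank_eq inf_le_right (by rw [h1, hA i0 i1 hne01])
      exact hne (e1 ▸ e2)
    have hinfle : Module.finrank ℂ ↥((π i0 ⊓ π m) ⊓ (π i0 ⊓ π i1)) ≤ 1 := by
      have := Submodule.finrank_mono
        (inf_le_left : (π i0 ⊓ π m) ⊓ (π i0 ⊓ π i1) ≤ π i0 ⊓ π m)
      rw [hA i0 m hm0] at this; exact this
    have hsupfr : Module.finrank ℂ ↥((π i0 ⊓ π m) ⊔ (π i0 ⊓ π i1)) = 2 := by omega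
    -- the span lies in L = Pl 0 ⊓ Pl 1
    have hsupleL : (π i0 ⊓ π m) ⊔ (π i0 ⊓ π i1) ≤ Pl 0 ⊓ Pl 1 :=
      sup_le (le_inf (hB i0 m 0 hm0) (hB i0 m 1 hm0))
        (le_inf (hB i0 i1 0 hne01) (hB i0 i1 1 hne01))
    have hLeq : (π i0 ⊓ π m) ⊔ (π i0 ⊓ π i1) = Pl 0 ⊓ Pl 1 :=
      Submodule.eq_of_le_of_finrank_le hsupleL (by omega)
    have hLpi0 : Pl 0 ⊓ Pl 1 ≤ π i0 := by
      rw [← hLeq]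
      exact sup_le inf_le_left inf_le_left
    have hLfr : Module.finrank ℂ ↥(Pl 0 ⊓ Pl 1) = 2 := by
      rw [← hLeq]; exact hsupfr
    have hl0 : Pl 0 ⊓ Pl 1 = π i0 ⊓ Pl 0 :=
      Submodule.eq_of_le_of_finrank_le (le_inf hLpi0 inf_le_left)
        (by rw [hline i0 0, hLfr])
    have hl1 : Pl 0 ⊓ Pl 1 = π i0 ⊓ Pl 1 :=
      Submodule.eq_of_le_of_finrank_le (le_inf hLpi0 inf_le_right)
        (by rw [hline i0 1, hLfr])
    exact hldist i0 i0 0 1 (by simp) (hl0 ▸ hl1)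
  -- pick a nonzero vector in the common point
  have hbot : π i0 ⊓ π i1 ≠ ⊥ := by
    intro h
    have := hA i0 i1 hne01
    rw [h] at this
    simp at this
  obtain ⟨v, hv, hv0⟩ := Submodule.exists_mem_ne_zero_of_ne_bot hbot
  refine ⟨v, hv0, fun i => ?_⟩
  by_cases hi : i = i0
  · exact hi ▸ hv.1
  · have := hD i hi
    have hvm : v ∈ π i0 ⊓ π i := by rw [this]; exact hv
    exact hvm.2
end
end

section
/- Let Z be a set of 10 points in ℙ⁴ distributed two per line on 5 lines ℓ₁, …, ℓ₅ through a common point O ∉ Z, such that the union of any four of the lines spans ℙ⁴. Then no 5 points of Z are coplanar. -/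
noncomputable section

/-!
Suppose five points of `Z` lie in a plane `W`.  Each line carries only two points of `Z`, so the
five points meet at least three lines.  If they meet four lines, then `W` and `O` span a
hyperplane, and it contains these four lines, since each is spanned by `O` and one of its
points.  Otherwise two of the points lie on one line, so `W` contains that line and hence `O`;
now `W` contains the three lines it meets, and adding a fourth line through `O` raises the
dimension by only one, giving again a hyperplane containing four lines.
-/

open Module
open scoped LinearAlgebra.Projectivization

theorem Finset.card_le_card_image_fst_mul {α β : Type*} [DecidableEq α] [Fintype β]
    (s : Finset (α × β)) : s.card ≤ (s.image Prod.fst).card * Fintype.card β :=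
  calc s.card ≤ (s.image Prod.fst ×ˢ (univ : Finset β)).card :=
        card_le_card fun p hp => mem_product.2 ⟨mem_image_of_mem _ hp, mem_univ _⟩
    _ = _ := by rw [card_product, card_univ]

namespace Submodule

variable {K V : Type*} [Field K] [AddCommGroup V] [Module K V]

theorem le_of_finrank_eq_two {L W : Submodule K V} (hL : finrank K L = 2)
    {x y : ℙ K V} (hxy : x ≠ y) (hxL : x.rep ∈ L) (hyL : y.rep ∈ L) (hxW : x.rep ∈ W)
    (hyW : y.rep ∈ W) : L ≤ W := by
  have hind : LinearIndependent K ![x.rep, y.rep] := by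
    convert Projectivization.independent_iff.1
      ((Projectivization.independent_pair_iff_ne x y).2 hxy)
    ext i; fin_cases i <;> rfl
  have : FiniteDimensional K L := Module.finite_of_finrank_eq_succ hL
  have hspan : span K (Set.range ![x.rep, y.rep]) = L := by
    refine eq_of_le_of_finrank_eq ?_ ?_
    · simpa [span_le, Set.insert_subset_iff] using ⟨hyL, hxL⟩
    · simp [finrank_span_eq_card hind, hL]
  rw [← hspan, span_le]
  simpa [Set.insert_subset_iff] using ⟨hyW, hxW⟩

theorem finrank_sup_add_one_le {U W : Submodule K V} [FiniteDimensional K U]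
    [FiniteDimensional K W] {v : V} (hv : v ≠ 0) (hvU : v ∈ U) (hvW : v ∈ W) :
    finrank K ↥(U ⊔ W) + 1 ≤ finrank K U + finrank K W := by
  have hinf : 1 ≤ finrank K ↥(U ⊓ W) := by
    simpa [finrank_span_singleton hv] using
      finrank_mono ((span_singleton_le_iff_mem v _).2 (mem_inf.2 ⟨hvU, hvW⟩))
  have := finrank_sup_add_finrank_inf_eq U W
  omega

theorem finrank_sup_span_singleton_le (W : Submodule K V) [FiniteDimensional K W] (v : V) :
    finrank K ↥(W ⊔ K ∙ v) ≤ finrank K W + 1 :=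
  (finrank_add_le_finrank_add_finrank W _).trans
    (by gcongr; simpa using finrank_span_le_card (R := K) ({v} : Set V))

end Submodule

section Configuration

variable {O : P4} {ℓ : Fin 5 → Submodule ℂ V5} {Pt : Fin 5 → Fin 2 → P4}

theorem finrank_eq_five_of_center_mem_of_meets_four_lines (hdim : ∀ i, finrank ℂ (ℓ i) = 2)
    (hO : ∀ i, O.rep ∈ ℓ i) (hspan4 : ∀ s : Finset (Fin 5), s.card = 4 → (⨆ i ∈ s, ℓ i) = ⊤)
    (hPt : ∀ i k, (Pt i k).rep ∈ ℓ i) (hne : ∀ i k, Pt i k ≠ O) {U : Submodule ℂ V5}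
    (hOU : O.rep ∈ U) {t : Finset (Fin 5)} (ht : t.card = 4)
    (hmeets : ∀ i ∈ t, ∃ k, (Pt i k).rep ∈ U) : finrank ℂ U = 5 := by
  have hU : U = ⊤ := top_le_iff.1 <| hspan4 t ht ▸ iSup₂_le fun i hi =>
    (hmeets i hi).elim fun k hk =>
      Submodule.le_of_finrank_eq_two (hdim i) (hne i k) (hPt i k) (hO i) hk hOU
  rw [hU, finrank_top, finrank_fin_fun]

theorem not_plane_meets_four_lines (hdim : ∀ i, finrank ℂ (ℓ i) = 2)
    (hO : ∀ i, O.rep ∈ ℓ i) (hspan4 : ∀ s : Finset (Fin 5), s.card = 4 → (⨆ i ∈ s, ℓ i) = ⊤)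
    (hPt : ∀ i k, (Pt i k).rep ∈ ℓ i) (hne : ∀ i k, Pt i k ≠ O) {W : Submodule ℂ V5}
    (hW : finrank ℂ W ≤ 3) {t : Finset (Fin 5)} (ht : t.card = 4)
    (hmeets : ∀ i ∈ t, ∃ k, (Pt i k).rep ∈ W) : False := by
  have hfive := finrank_eq_five_of_center_mem_of_meets_four_lines hdim hO hspan4 hPt hne
    (Submodule.mem_sup_right (Submodule.mem_span_singleton_self O.rep)) ht fun i hi =>
      (hmeets i hi).imp fun _ => Submodule.mem_sup_left
  have := W.finrank_sup_span_singleton_le O.rep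
  omega

theorem not_plane_through_center_meets_three_lines (hdim : ∀ i, finrank ℂ (ℓ i) = 2)
    (hO : ∀ i, O.rep ∈ ℓ i) (hspan4 : ∀ s : Finset (Fin 5), s.card = 4 → (⨆ i ∈ s, ℓ i) = ⊤)
    (hPt : ∀ i k, (Pt i k).rep ∈ ℓ i) (hne : ∀ i k, Pt i k ≠ O) {W : Submodule ℂ V5}
    (hW : finrank ℂ W ≤ 3) (hOW : O.rep ∈ W) {t : Finset (Fin 5)} (ht : t.card = 3)
    (hmeets : ∀ i ∈ t, ∃ k, (Pt i k).rep ∈ W) : False := by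
  obtain ⟨j, -, hj⟩ := Finset.exists_mem_notMem_of_card_lt_card
    (by simp only [Finset.card_univ, Fintype.card_fin]; omega : t.card < Finset.univ.card)
  have hfive := finrank_eq_five_of_center_mem_of_meets_four_lines hdim hO hspan4 hPt hne
    (Submodule.mem_sup_right (hO j)) (t := insert j t)
    (by rw [Finset.card_insert_of_notMem hj, ht]) fun i hi => by
      rcases Finset.mem_insert.1 hi with rfl | hit
      · exact ⟨0, Submodule.mem_sup_right (hPt i 0)⟩
      · exact (hmeets i hit).imp fun _ => Submodule.mem_sup_left
  have := Submodule.finrank_sup_add_one_le O.rep_nonzero hOW (hO j)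
  have := hdim j
  omega

end Configuration

/-- Let `Z` be a set of 10 points in ℙ⁴ distributed two per line on 5 lines
`ℓ₁, …, ℓ₅` through a common point `O ∉ Z`, such that the union of any four of the
lines spans ℙ⁴.  Then no 5 points of `Z` are coplanar. -/
theorem stmt_10 (O : P4) (ℓ : Fin 5 → Submodule ℂ V5)
    (hdim : ∀ i, Module.finrank ℂ (ℓ i) = 2)
    (hO : ∀ i, O.rep ∈ ℓ i)
    (hspan4 : ∀ s : Finset (Fin 5), s.card = 4 → (⨆ i ∈ s, ℓ i) = ⊤)
    (Pt : Fin 5 → Fin 2 → P4)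
    (hPt : ∀ i k, (Pt i k).rep ∈ ℓ i)
    (hinj : Function.Injective (fun p : Fin 5 × Fin 2 => Pt p.1 p.2))
    (hne : ∀ i k, Pt i k ≠ O) :
    ¬ ∃ s : Finset (Fin 5 × Fin 2), s.card = 5 ∧
        ∃ W : Submodule ℂ V5, Module.finrank ℂ W ≤ 3 ∧
          ∀ p ∈ s, (Pt p.1 p.2).rep ∈ W := by
  rintro ⟨s, hs5, W, hW3, hWmem⟩
  have hT3 : 3 ≤ (s.image Prod.fst).card := by
    have := s.card_le_card_image_fst_mul
    rw [Fintype.card_fin] at this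
    omega
  set T := s.image Prod.fst
  have hmeets : ∀ i ∈ T, ∃ k, (Pt i k).rep ∈ W := by
    simp only [T, Finset.mem_image]
    rintro i ⟨p, hp, rfl⟩
    exact ⟨p.2, hWmem p hp⟩
  by_cases hT4 : 4 ≤ T.card
  · obtain ⟨t, htT, ht⟩ := Finset.exists_subset_card_eq hT4
    exact not_plane_meets_four_lines hdim hO hspan4 hPt hne hW3 ht fun i hi => hmeets i (htT hi)
  · obtain ⟨p, hp, q, hq, hpq, hpq₁⟩ := Finset.exists_ne_map_eq_of_card_lt_of_maps_to
      (by omega : T.card < s.card) fun p hp => Finset.mem_image_of_mem Prod.fst hp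
    have hOW : O.rep ∈ W := Submodule.le_of_finrank_eq_two (hdim p.1) (fun h => hpq (hinj h))
      (hPt p.1 p.2) (hpq₁ ▸ hPt q.1 q.2) (hWmem p hp) (hWmem q hq) (hO p.1)
    exact not_plane_through_center_meets_three_lines hdim hO hspan4 hPt hne hW3 hOW
      (by omega) hmeets
end
end

section
/- Let C ⊂ ℙ⁴ be the union of 5 distinct lines through a common point O, such that no hyperplane contains all five lines and no four of the lines are coplanar. Let Q be a general point of ℙ⁴ and π_Q the projection from Q to a hyperplane. Then there is exactly one quadric surface in ℙ³ containing π_Q(C), and it is a quadric cone with vertex π_Q(O). -/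
/-!
Take `x` off every proper subspace spanned by some of the lines; this is a nonempty Zariski-open
condition, cut out by a product of linear forms. Put `u = L O`. A quadric `Q` containing the
projected lines vanishes on every plane `L (ℓ i)`, all of which contain `u`. Hence `polar Q u`
vanishes on their span, which is all of `V4`. So `Q` is a cone with vertex `u` and descends to
a conic on the 3-dimensional quotient `V4 ⧸ ℂ ∙ u`.
There the five lines become five points, no two equal and no four collinear (this is where the
genericity of `x` is used). Conics form a 6-dimensional space, and each of the five points is
separated from the other four by a pair of lines through them, so the points impose independent
conditions. Thus exactly one conic passes through them, and the cone over it is the unique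
quadric.
-/

noncomputable section

abbrev V4 : Type := Fin 4 → ℂ

open Module Submodule QuadraticMap

namespace QuadraticMap

variable {R V ι : Type*} [CommRing R] [AddCommGroup V] [Module R V]

def basisCoeffs (b : Basis ι R V) :
    QuadraticMap R V R →ₗ[R] (ι → R) × ({a : Sym2 ι // ¬a.IsDiag} → R) where
  toFun Q := (fun i => Q (b i), fun a => polarSym2 Q (a.1.map b))
  map_add' Q Q' := Prod.ext rfl <| funext fun ⟨a, _⟩ => by
    induction a using Sym2.ind
    simp [polar_add]
  map_smul' c Q := Prod.ext rfl <| funext fun ⟨a, _⟩ => by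
    induction a using Sym2.ind
    simp [polar_smul]

variable [LinearOrder ι]

theorem basisCoeffs_injective (b : Basis ι R V) : Function.Injective (basisCoeffs b) := by
  rw [← LinearMap.ker_eq_bot, LinearMap.ker_eq_bot']
  intro Q hQ
  have hbilin : Q.toBilin b = 0 := by
    refine b.ext fun i => b.ext fun j => ?_
    rw [toBilin_apply]
    split_ifs with hij
    · exact congrFun (congrArg Prod.fst hQ) i
    · exact congrFun (congrArg Prod.snd hQ) ⟨s(i, j), by simpa using hij⟩
    · rfl
  rw [← toQuadraticMap_toBilin Q b, hbilin]
  rfl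

theorem basisCoeffs_surjective [Fintype ι] (b : Basis ι R V) :
    Function.Surjective (basisCoeffs b) := by
  rintro ⟨d, o⟩
  let M : Matrix ι ι R := .of fun i j =>
    if i = j then d i else if h : i < j then o ⟨s(i, j), by simpa using h.ne⟩ else 0
  refine ⟨LinearMap.BilinMap.toQuadraticMap (Matrix.toLinearMap₂ b b M),
    Prod.ext (funext fun i => ?_) (funext fun ⟨a, ha⟩ => ?_)⟩
  · simp only [basisCoeffs, LinearMap.coe_mk, AddHom.coe_mk,
      LinearMap.BilinMap.toQuadraticMap_apply, Matrix.toLinearMap₂_apply_basis]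
    simp [M]
  · induction a using Sym2.ind with
    | _ i j =>
    simp only [basisCoeffs, LinearMap.coe_mk, AddHom.coe_mk, Sym2.map_mk, polarSym2_sym2Mk,
      LinearMap.BilinMap.polar_toQuadraticMap, Matrix.toLinearMap₂_apply_basis, M]
    have hij : i ≠ j := by simpa using ha
    rcases hij.lt_or_gt with h | h
    · simp [h, hij, hij.symm, h.not_gt]
    · simp [h, hij, hij.symm, h.not_gt, Sym2.eq_swap]

def basisCoeffsEquiv [Fintype ι] (b : Basis ι R V) :
    QuadraticForm R V ≃ₗ[R] (ι → R) × ({a : Sym2 ι // ¬a.IsDiag} → R) :=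
  .ofBijective (basisCoeffs b) ⟨basisCoeffs_injective b, basisCoeffs_surjective b⟩

variable [Nontrivial R] [Module.Free R V] [Module.Finite R V]

instance : Module.Finite R (QuadraticForm R V) :=
  .equiv (basisCoeffsEquiv (Module.finBasis R V)).symm

theorem finrank_quadraticForm :
    finrank R (QuadraticForm R V) = (finrank R V + 1).choose 2 := by
  rw [(basisCoeffsEquiv (Module.finBasis R V)).finrank_eq, finrank_prod,
    finrank_fintype_fun_eq_card, finrank_fintype_fun_eq_card, Sym2.card_subtype_not_diag,
    Fintype.card_fin, Nat.choose_succ_succ, Nat.choose_one_right]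

end QuadraticMap

section FivePoints

variable {𝕜 K : Type*} [Field 𝕜] [AddCommGroup K] [Module 𝕜 K]

theorem finrank_span_pair_le (u v : K) : finrank 𝕜 (span 𝕜 {u, v}) ≤ 2 := by
  classical
  have h := finrank_span_finset_le_card (R := 𝕜) ({u, v} : Finset K)
  rw [Finset.coe_pair] at h
  exact h.trans Finset.card_le_two

theorem notMem_span_pair_of_mem_span_pair [FiniteDimensional 𝕜 K] (hK : 2 < finrank 𝕜 K)
    {p u v w : K} (hpu : finrank 𝕜 (span 𝕜 {p, u}) = 2) (hspan : span 𝕜 {p, u, v, w} = ⊤)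
    (hv : p ∈ span 𝕜 {u, v}) : p ∉ span 𝕜 {u, w} := by
  intro hw
  have hplane {y : K} (hy : p ∈ span 𝕜 {u, y}) : span 𝕜 {u, y} = span 𝕜 {p, u} := by
    refine (eq_of_le_of_finrank_le ?_ (hpu ▸ finrank_span_pair_le u y)).symm
    rw [span_le, Set.pair_subset_iff]
    exact ⟨hy, subset_span (by simp)⟩
  have hle : span 𝕜 {p, u, v, w} ≤ span 𝕜 {p, u} := by
    simp only [span_le, Set.insert_subset_iff, Set.singleton_subset_iff, SetLike.mem_coe]
    refine ⟨subset_span (by simp), subset_span (by simp), ?_, ?_⟩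
    · exact hplane hv ▸ subset_span (by simp)
    · exact hplane hw ▸ subset_span (by simp)
  have := finrank_mono hle
  rw [hspan, finrank_top, hpu] at this
  omega

theorem exists_quadraticForm_ne_zero_of_notMem_span_pair {p a b c d : K}
    (hab : p ∉ span 𝕜 {a, b}) (hcd : p ∉ span 𝕜 {c, d}) :
    ∃ G : QuadraticForm 𝕜 K, G p ≠ 0 ∧ G a = 0 ∧ G b = 0 ∧ G c = 0 ∧ G d = 0 := by
  obtain ⟨φ, hφp, hφ⟩ := exists_dual_map_eq_bot_of_notMem hab inferInstance
  obtain ⟨ψ, hψp, hψ⟩ := exists_dual_map_eq_bot_of_notMem hcd inferInstance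
  rw [← LinearMap.le_ker_iff_map, span_le, Set.pair_subset_iff] at hφ hψ
  refine ⟨linMulLin φ ψ, mul_ne_zero hφp hψp, ?_, ?_, ?_, ?_⟩ <;>
    simp [linMulLin_apply, LinearMap.mem_ker.1 hφ.1, LinearMap.mem_ker.1 hφ.2,
      LinearMap.mem_ker.1 hψ.1, LinearMap.mem_ker.1 hψ.2]

theorem exists_quadraticForm_vanishing_off_four [FiniteDimensional 𝕜 K]
    (hK : finrank 𝕜 K = 3) {P : Fin 5 → K}
    (hpair : Pairwise fun i j => finrank 𝕜 (span 𝕜 {P i, P j}) = 2)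
    (h4 : ∀ s : Finset (Fin 5), s.card = 4 → span 𝕜 (P '' s) = ⊤) :
    ∃ G : QuadraticForm 𝕜 K, G (P 4) ≠ 0 ∧ ∀ i ≠ 4, G (P i) = 0 := by
  -- `P 4` is on no two lines `P a P b`, `P a P c` through a common point `P a`: so if the
  -- pairing `{0, 1} | {2, 3}` has a line through `P 4`, the pairing `{0, 2} | {1, 3}` has none.
  have hbad {a b c : Fin 5} (hs : ({4, a, b, c} : Finset (Fin 5)).card = 4) (ha : 4 ≠ a)
      (hb : P 4 ∈ span 𝕜 {P a, P b}) : P 4 ∉ span 𝕜 {P a, P c} :=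
    notMem_span_pair_of_mem_span_pair (by omega) (hpair ha)
      (by simpa [Set.image_insert_eq] using h4 _ hs) hb
  suffices ∃ G : QuadraticForm 𝕜 K,
      G (P 4) ≠ 0 ∧ G (P 0) = 0 ∧ G (P 1) = 0 ∧ G (P 2) = 0 ∧ G (P 3) = 0 by
    obtain ⟨G, h4, h0, h1, h2, h3⟩ := this
    refine ⟨G, h4, fun i hi => ?_⟩
    fin_cases i <;> simp_all
  by_cases h : P 4 ∈ span 𝕜 {P 0, P 1} ∨ P 4 ∈ span 𝕜 {P 2, P 3}
  · obtain ⟨G, hG⟩ : ∃ G : QuadraticForm 𝕜 K,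
        G (P 4) ≠ 0 ∧ G (P 0) = 0 ∧ G (P 2) = 0 ∧ G (P 1) = 0 ∧ G (P 3) = 0 := by
      refine exists_quadraticForm_ne_zero_of_notMem_span_pair ?_ ?_ <;> rcases h with h | h
      · exact hbad (a := 0) (b := 1) (c := 2) (by decide) (by decide) h
      · rw [Set.pair_comm]
        exact hbad (a := 2) (b := 3) (c := 0) (by decide) (by decide) h
      · rw [Set.pair_comm] at h
        exact hbad (a := 1) (b := 0) (c := 3) (by decide) (by decide) h
      · rw [Set.pair_comm] at h ⊢
        exact hbad (a := 3) (b := 2) (c := 1) (by decide) (by decide) h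
    exact ⟨G, by tauto⟩
  · rw [not_or] at h
    exact exists_quadraticForm_ne_zero_of_notMem_span_pair h.1 h.2

theorem exists_quadraticForm_vanishing_off [FiniteDimensional 𝕜 K] (hK : finrank 𝕜 K = 3)
    {P : Fin 5 → K} (hpair : Pairwise fun i j => finrank 𝕜 (span 𝕜 {P i, P j}) = 2)
    (h4 : ∀ s : Finset (Fin 5), s.card = 4 → span 𝕜 (P '' s) = ⊤) (j : Fin 5) :
    ∃ G : QuadraticForm 𝕜 K, G (P j) ≠ 0 ∧ ∀ i ≠ j, G (P i) = 0 := by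
  let σ := Equiv.swap j 4
  obtain ⟨G, hGj, hG⟩ := exists_quadraticForm_vanishing_off_four hK (P := P ∘ σ)
    (hpair.comp_of_injective σ.injective) fun s hs => by
      rw [Set.image_comp]
      simpa using h4 (s.map σ.toEmbedding) (by simpa using hs)
  refine ⟨G, by simpa [σ] using hGj, fun i hi => ?_⟩
  simpa [σ] using hG (σ i) (by simpa [σ, Equiv.swap_apply_eq_iff] using hi)

theorem exists_unique_conic_of_five_points [FiniteDimensional 𝕜 K] (hK : finrank 𝕜 K = 3)
    {P : Fin 5 → K} (hpair : Pairwise fun i j => finrank 𝕜 (span 𝕜 {P i, P j}) = 2)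
    (h4 : ∀ s : Finset (Fin 5), s.card = 4 → span 𝕜 (P '' s) = ⊤) :
    ∃ C : QuadraticForm 𝕜 K, C ≠ 0 ∧ (∀ i, C (P i) = 0) ∧
      ∀ C' : QuadraticForm 𝕜 K, (∀ i, C' (P i) = 0) → ∃ c : 𝕜, C' = c • C := by
  let ev : QuadraticForm 𝕜 K →ₗ[𝕜] Fin 5 → 𝕜 :=
    { toFun Q i := Q (P i), map_add' _ _ := rfl, map_smul' _ _ := rfl }
  have hsingle (j : Fin 5) : ∃ G, ev G = fun i => if j = i then 1 else 0 := by
    obtain ⟨G, hGj, hG⟩ := exists_quadraticForm_vanishing_off hK hpair h4 j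
    refine ⟨(G (P j))⁻¹ • G, funext fun i => ?_⟩
    by_cases hij : j = i
    · subst hij
      simp [ev, hGj]
    · simp [ev, hij, hG i (Ne.symm hij)]
  have hsurj : Function.Surjective ev := by
    choose G hG using hsingle
    intro f
    refine ⟨∑ j, f j • G j, ?_⟩
    rw [map_sum, pi_eq_sum_univ f]
    simp [hG]
  have hker : finrank 𝕜 (LinearMap.ker ev) = 1 := by
    have := ev.finrank_range_add_finrank_ker
    rw [LinearMap.range_eq_top.2 hsurj, finrank_top, finrank_quadraticForm, hK] at this
    norm_num [Nat.choose] at this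
    omega
  obtain ⟨C, hC, hC0⟩ := exists_mem_ne_zero_of_ne_bot fun (h : LinearMap.ker ev = ⊥) => by
    rw [h, finrank_bot] at hker
    omega
  have hspan := eq_span_singleton_of_mem_of_finrank_eq_one hker hC hC0
  refine ⟨C, hC0, fun i => congrFun hC i, fun C' hC' => ?_⟩
  obtain ⟨c, hc⟩ := mem_span_singleton.1 (hspan ▸ funext hC' : C' ∈ 𝕜 ∙ C)
  exact ⟨c, hc.symm⟩

end FivePoints

namespace MvPolynomial

variable {σ K : Type*} [Fintype σ] [Field K]

theorem exists_isHomogeneous_one_eval_eq (φ : (σ → K) →ₗ[K] K) :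
    ∃ p : MvPolynomial σ K, p.IsHomogeneous 1 ∧ ∀ v, eval v p = φ v := by
  classical
  refine ⟨∑ j, C (φ (Pi.single j 1)) * X j, IsHomogeneous.sum _ _ _ fun j _ => by
    simpa using (isHomogeneous_C σ _).mul (isHomogeneous_X K j), fun v => ?_⟩
  conv_rhs => rw [pi_eq_sum_univ' v, map_sum]
  simp [mul_comm]

theorem exists_isHomogeneous_eval_eq_zero_of_ne_top {W : Submodule K (σ → K)} (hW : W ≠ ⊤) :
    ∃ p : MvPolynomial σ K, p ≠ 0 ∧ p.IsHomogeneous 1 ∧ ∀ v ∈ W, eval v p = 0 := by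
  obtain ⟨φ, hφ0, hφW⟩ := exists_dual_map_eq_bot_of_lt_top hW.lt_top inferInstance
  obtain ⟨p, hp, hpφ⟩ := exists_isHomogeneous_one_eval_eq φ
  refine ⟨p, fun h => hφ0 (LinearMap.ext fun v => by simp [← hpφ, h]), hp, fun v hv => ?_⟩
  rw [hpφ, ← LinearMap.mem_ker]
  exact LinearMap.le_ker_iff_map.2 hφW hv

theorem exists_isHomogeneous_forall_notMem {ι : Type*} [Fintype ι]
    {W : ι → Submodule K (σ → K)} (hW : ∀ i, W i ≠ ⊤) :
    ∃ F : MvPolynomial σ K, F ≠ 0 ∧ (∃ n, F.IsHomogeneous n) ∧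
      ∀ v, eval v F ≠ 0 → ∀ i, v ∉ W i := by
  choose p hp0 hp hpW using fun i => exists_isHomogeneous_eval_eq_zero_of_ne_top (hW i)
  refine ⟨∏ i, p i, Finset.prod_ne_zero_iff.2 fun i _ => hp0 i,
    ⟨_, IsHomogeneous.prod _ _ _ fun i _ => hp i⟩, fun v hv i hvi => ?_⟩
  rw [map_prod] at hv
  exact Finset.prod_ne_zero_iff.1 hv i (Finset.mem_univ i) (hpW i v hvi)

end MvPolynomial

section Projection

variable {𝕜 V U : Type*} [Field 𝕜] [AddCommGroup V] [Module 𝕜 V] [AddCommGroup U] [Module 𝕜 U]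

theorem Submodule.ne_top_of_finrank_lt {S : Submodule 𝕜 V} (h : finrank 𝕜 S < finrank 𝕜 V) :
    S ≠ ⊤ := fun htop => by
  rw [htop, finrank_top] at h
  exact lt_irrefl _ h

theorem Submodule.finrank_map_add_finrank_inf_ker [FiniteDimensional 𝕜 V] (f : V →ₗ[𝕜] U)
    (S : Submodule 𝕜 V) :
    finrank 𝕜 (S.map f) + finrank 𝕜 (S ⊓ LinearMap.ker f : Submodule 𝕜 V) = finrank 𝕜 S := by
  rw [← LinearMap.range_domRestrict, ← (f.domRestrict S).finrank_range_add_finrank_ker,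
    LinearMap.ker_domRestrict, ← finrank_map_subtype_eq, map_comap_subtype]

theorem Submodule.finrank_map_add_one_of_ker_eq [FiniteDimensional 𝕜 V] {f : V →ₗ[𝕜] U}
    {e x : V} (hker : LinearMap.ker f = 𝕜 ∙ e ⊔ 𝕜 ∙ x) (he : e ≠ 0) {S : Submodule 𝕜 V}
    (heS : e ∈ S) (hxS : x ∉ S) :
    finrank 𝕜 (S.map f) + 1 = finrank 𝕜 S := by
  have hinf : S ⊓ LinearMap.ker f = 𝕜 ∙ e := by
    rw [hker, inf_comm, sup_inf_assoc_of_le _ ((span_singleton_le_iff_mem _ _).2 heS),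
      (disjoint_span_singleton.2 fun h => absurd h hxS).symm.eq_bot, sup_bot_eq]
  rw [← finrank_map_add_finrank_inf_ker f S, hinf, finrank_span_singleton he]

theorem Submodule.finrank_sup_eq_three [FiniteDimensional 𝕜 V] {S T : Submodule 𝕜 V}
    (hS : finrank 𝕜 S = 2) (hT : finrank 𝕜 T = 2) (hST : S ≠ T) {e : V} (he : e ≠ 0)
    (heS : e ∈ S) (heT : e ∈ T) : finrank 𝕜 (S ⊔ T : Submodule 𝕜 V) = 3 := by
  have hsum := finrank_sup_add_finrank_inf_eq S T
  have hlow : 1 ≤ finrank 𝕜 (S ⊓ T : Submodule 𝕜 V) := by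
    rw [← finrank_span_singleton (K := 𝕜) he]
    exact finrank_mono ((span_singleton_le_iff_mem _ _).2 ⟨heS, heT⟩)
  have hlt : S ⊓ T < S := inf_le_left.lt_of_ne fun h =>
    hST (eq_of_le_of_finrank_eq (inf_eq_left.1 h) (hS.trans hT.symm))
  have := finrank_lt_finrank_of_lt hlt
  omega

theorem span_image_eq_map_finset_sup {ι : Type*} [DecidableEq ι] {f : V →ₗ[𝕜] U}
    {ℓ : ι → Submodule 𝕜 V} {P : ι → U} (hP : ∀ i, 𝕜 ∙ P i = (ℓ i).map f) (s : Finset ι) :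
    span 𝕜 (P '' s) = (s.sup ℓ).map f := by
  induction s using Finset.induction_on with
  | empty => simp
  | insert i s _ ih => rw [Finset.coe_insert, Set.image_insert_eq, span_insert, ih,
      Finset.sup_insert, Submodule.map_sup, hP]

end Projection

namespace QuadraticMap

variable {R M N : Type*} [CommRing R] [AddCommGroup M] [Module R M] [AddCommGroup N] [Module R N]

theorem polar_eq_zero_of_iSup_eq_top {ι : Type*} {Q : QuadraticMap R M N}
    {S : ι → Submodule R M} (hS : ∀ i, ∀ v ∈ S i, Q v = 0) (htop : ⨆ i, S i = ⊤) {u : M}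
    (hu : ∀ i, u ∈ S i) (w : M) : polar Q u w = 0 := by
  have : ⨆ i, S i ≤ LinearMap.ker (polarBilin Q u) := iSup_le fun i v hv => by
    simp [polar, hS i _ (add_mem (hu i) hv), hS i u (hu i), hS i v hv]
  exact this (htop ▸ mem_top)

theorem exists_eq_comp_mkQ {𝕜 W : Type*} [Field 𝕜] [AddCommGroup W] [Module 𝕜 W] [Module 𝕜 N]
    {Q : QuadraticMap 𝕜 W N} {u : W} (hu : Q u = 0) (hpolar : ∀ w, polar Q u w = 0) :
    ∃ C : QuadraticMap 𝕜 (W ⧸ 𝕜 ∙ u) N, Q = C.comp (𝕜 ∙ u).mkQ := by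
  obtain ⟨s, hs⟩ := (𝕜 ∙ u).mkQ.exists_rightInverse_of_surjective (range_mkQ _)
  refine ⟨Q.comp s, QuadraticMap.ext fun w => ?_⟩
  have hw : s ((𝕜 ∙ u).mkQ w) - w ∈ 𝕜 ∙ u :=
    (Submodule.Quotient.eq _).1 (LinearMap.congr_fun hs ((𝕜 ∙ u).mkQ w))
  obtain ⟨c, hc⟩ := mem_span_singleton.1 hw
  rw [QuadraticMap.comp_apply, QuadraticMap.comp_apply, eq_add_of_sub_eq hc.symm,
    QuadraticMap.map_add Q, QuadraticMap.map_smul, hu, polar_smul_left, hpolar]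
  simp

theorem forall_map_eq_zero_iff {𝕜 V U : Type*} [Field 𝕜] [AddCommGroup V] [Module 𝕜 V]
    [AddCommGroup U] [Module 𝕜 U] [Module 𝕜 N] {f : V →ₗ[𝕜] U} {S : Submodule 𝕜 V} {p : U}
    (hp : 𝕜 ∙ p = S.map f) (C : QuadraticMap 𝕜 U N) : (∀ v ∈ S, C (f v) = 0) ↔ C p = 0 := by
  refine ⟨fun h => ?_, fun h v hv => ?_⟩
  · obtain ⟨v, hv, rfl⟩ := mem_map.1 (hp ▸ mem_span_singleton_self p)
    exact h v hv
  · obtain ⟨c, hc⟩ := mem_span_singleton.1 (hp ▸ mem_map_of_mem hv : f v ∈ 𝕜 ∙ p)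
    rw [← hc, QuadraticMap.map_smul, h, smul_zero]

end QuadraticMap

section ConcurrentLines

variable {𝕜 V U : Type*} [Field 𝕜] [AddCommGroup V] [Module 𝕜 V] [FiniteDimensional 𝕜 V]
  [AddCommGroup U] [Module 𝕜 U]

structure IsConcurrentFiveLines (ℓ : Fin 5 → Submodule 𝕜 V) (e : V) : Prop where
  finrank_eq : ∀ i, finrank 𝕜 (ℓ i) = 2
  ne_zero : e ≠ 0
  mem : ∀ i, e ∈ ℓ i
  injective : Function.Injective ℓ
  not_coplanar : ∀ s : Finset (Fin 5), s.card = 4 →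
    ¬ ∃ W : Submodule 𝕜 V, finrank 𝕜 W = 3 ∧ ∀ i ∈ s, ℓ i ≤ W

namespace IsConcurrentFiveLines

variable {ℓ : Fin 5 → Submodule 𝕜 V} {e : V}

theorem finrank_sup_eq_three (h : IsConcurrentFiveLines ℓ e) {i j : Fin 5} (hij : i ≠ j) :
    finrank 𝕜 (ℓ i ⊔ ℓ j : Submodule 𝕜 V) = 3 :=
  Submodule.finrank_sup_eq_three (h.finrank_eq i) (h.finrank_eq j) (h.injective.ne hij)
    h.ne_zero (h.mem i) (h.mem j)

theorem four_le_finrank_sup (h : IsConcurrentFiveLines ℓ e) {s : Finset (Fin 5)}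
    (hs : s.card = 4) : 4 ≤ finrank 𝕜 ↥(s.sup ℓ) := by
  obtain ⟨i, hi, j, hj, hij⟩ := Finset.one_lt_card.1 (by omega : 1 < s.card)
  have hle := finrank_mono (sup_le (Finset.le_sup (f := ℓ) hi) (Finset.le_sup hj))
  have hne : finrank 𝕜 ↥(s.sup ℓ) ≠ 3 := fun h3 =>
    h.not_coplanar s hs ⟨_, h3, fun k hk => Finset.le_sup hk⟩
  have := h.finrank_sup_eq_three hij
  omega

theorem finrank_map_sup_add_one (h : IsConcurrentFiveLines ℓ e) (hV : finrank 𝕜 V = 5) {x : V}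
    (hx : ∀ s : Finset (Fin 5), s.sup ℓ ≠ ⊤ → x ∉ s.sup ℓ) {f : V →ₗ[𝕜] U}
    (hker : LinearMap.ker f = 𝕜 ∙ e ⊔ 𝕜 ∙ x) {s : Finset (Fin 5)} (hs : s.Nonempty)
    (hlt : finrank 𝕜 ↥(s.sup ℓ) < 5) :
    finrank 𝕜 ↥((s.sup ℓ).map f) + 1 = finrank 𝕜 ↥(s.sup ℓ) := by
  obtain ⟨i, hi⟩ := hs
  exact finrank_map_add_one_of_ker_eq hker h.ne_zero (Finset.le_sup (f := ℓ) hi (h.mem i))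
    (hx s (ne_top_of_finrank_lt (by rwa [hV])))

theorem finrank_eq_three_of_ker_eq (h : IsConcurrentFiveLines ℓ e) (hV : finrank 𝕜 V = 5)
    {x : V} (hx : x ∉ ℓ 0) {f : V →ₗ[𝕜] U} (hf : Function.Surjective f)
    (hker : LinearMap.ker f = 𝕜 ∙ e ⊔ 𝕜 ∙ x) : finrank 𝕜 U = 3 := by
  have hxe : x ∉ 𝕜 ∙ e := fun hxe => hx ((span_singleton_le_iff_mem _ _).2 (h.mem 0) hxe)
  have hx0 : x ≠ 0 := fun hx0 => hxe (hx0 ▸ zero_mem _)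
  have hsup := finrank_sup_add_finrank_inf_eq (𝕜 ∙ e) (𝕜 ∙ x)
  rw [((disjoint_span_singleton' hx0).2 hxe).eq_bot, finrank_bot,
    finrank_span_singleton h.ne_zero, finrank_span_singleton hx0, ← hker] at hsup
  have := f.finrank_range_add_finrank_ker
  rw [LinearMap.range_eq_top.2 hf, finrank_top, hV] at this
  omega

theorem exists_points_of_map (h : IsConcurrentFiveLines ℓ e) (hV : finrank 𝕜 V = 5) {x : V}
    (hx : ∀ s : Finset (Fin 5), s.sup ℓ ≠ ⊤ → x ∉ s.sup ℓ) {f : V →ₗ[𝕜] U}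
    (hf : Function.Surjective f) (hker : LinearMap.ker f = 𝕜 ∙ e ⊔ 𝕜 ∙ x) :
    finrank 𝕜 U = 3 ∧ ∃ P : Fin 5 → U, (∀ i, 𝕜 ∙ P i = (ℓ i).map f) ∧
      (Pairwise fun i j => finrank 𝕜 (span 𝕜 {P i, P j}) = 2) ∧
      ∀ s : Finset (Fin 5), s.card = 4 → span 𝕜 (P '' s) = ⊤ := by
  have hproj {s : Finset (Fin 5)} := h.finrank_map_sup_add_one hV hx hker (s := s)
  have hU : finrank 𝕜 U = 3 := by
    have hℓ0 : ℓ 0 ≠ ⊤ := ne_top_of_finrank_lt (by rw [h.finrank_eq, hV]; omega)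
    exact h.finrank_eq_three_of_ker_eq hV (by simpa using hx {0} (by simpa using hℓ0)) hf hker
  have : FiniteDimensional 𝕜 U := .of_surjective f hf
  have hpoint (i : Fin 5) : ∃ p : U, 𝕜 ∙ p = (ℓ i).map f := by
    have hline : finrank 𝕜 ↥((ℓ i).map f) = 1 := by
      have := hproj (Finset.singleton_nonempty i)
        (by rw [Finset.sup_singleton, h.finrank_eq i]; omega)
      rw [Finset.sup_singleton, h.finrank_eq i] at this
      omega
    obtain ⟨p, hp, hp0⟩ := exists_mem_ne_zero_of_ne_bot fun (hbot : (ℓ i).map f = ⊥) => by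
      rw [hbot, finrank_bot] at hline
      omega
    exact ⟨p, (eq_span_singleton_of_mem_of_finrank_eq_one hline hp hp0).symm⟩
  choose P hP using hpoint
  have hspan := span_image_eq_map_finset_sup hP
  refine ⟨hU, P, hP, fun i j hij => ?_, fun s hs => ?_⟩
  · have h3 := h.finrank_sup_eq_three hij
    have := hproj (s := {i, j}) (by simp)
      (by rw [Finset.sup_insert, Finset.sup_singleton, h3]; omega)
    change finrank 𝕜 (span 𝕜 {P i, P j}) = 2
    rw [← Set.image_pair, ← Finset.coe_pair, hspan]
    rw [Finset.sup_insert, Finset.sup_singleton, h3] at this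
    rw [Finset.sup_insert, Finset.sup_singleton]
    omega
  · rw [hspan]
    refine eq_top_of_finrank_eq ?_
    by_cases htop : s.sup ℓ = ⊤
    · rw [htop, Submodule.map_top, LinearMap.range_eq_top.2 hf, finrank_top]
    · have hlt : finrank 𝕜 ↥(s.sup ℓ) < 5 :=
        (Submodule.finrank_lt (s := s.sup ℓ) htop).trans_eq hV
      have := hproj (Finset.card_pos.1 (by omega)) hlt
      have := h.four_le_finrank_sup hs
      have := finrank_le ((s.sup ℓ).map f)
      omega

end IsConcurrentFiveLines

end ConcurrentLines

/-- Let `C ⊂ ℙ⁴` be the union of 5 distinct lines through a common point `O`, such that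
no hyperplane contains all five lines and no four of the lines are coplanar.  Let `Q` be
a general point of ℙ⁴ (any point of a nonempty Zariski-open set) and `π_Q` the
projection from `Q` to a hyperplane ℙ³ (realized by a surjective linear map
`L : ℂ⁵ → ℂ⁴` with kernel the line of `Q`).  Then there is exactly one quadric surface
in ℙ³ (up to a nonzero scalar) containing `π_Q(C)`, and it is a quadric cone with
vertex `π_Q(O)`. -/
theorem stmt_11 (O : P4) (ℓ : Fin 5 → Submodule ℂ V5)
    (hdim : ∀ i, Module.finrank ℂ (ℓ i) = 2)
    (hO : ∀ i, O.rep ∈ ℓ i)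
    (hlinj : Function.Injective ℓ)
    (hnohyp : (⨆ i, ℓ i) = ⊤)
    (hno4 : ∀ s : Finset (Fin 5), s.card = 4 →
        ¬ ∃ W : Submodule ℂ V5, Module.finrank ℂ W = 3 ∧ ∀ i ∈ s, ℓ i ≤ W) :
    ∃ F : MvPolynomial (Fin 5) ℂ, F ≠ 0 ∧ (∃ n, F.IsHomogeneous n) ∧
      ∀ x : P4, MvPolynomial.eval x.rep F ≠ 0 →
        ∀ L : V5 →ₗ[ℂ] V4, Function.Surjective L →
          LinearMap.ker L = Submodule.span ℂ {x.rep} →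
          ∃ Q : QuadraticForm ℂ V4, Q ≠ 0 ∧
            (∀ i, ∀ v ∈ ℓ i, Q (L v) = 0) ∧
            (∀ w : V4, Q (L O.rep + w) - Q (L O.rep) - Q w = 0) ∧
            (∀ Q' : QuadraticForm ℂ V4, Q' ≠ 0 → (∀ i, ∀ v ∈ ℓ i, Q' (L v) = 0) →
              ∃ c : ℂ, c ≠ 0 ∧ ∀ w : V4, Q' w = c * Q w) := by
  have hℓ : IsConcurrentFiveLines ℓ O.rep := ⟨hdim, O.rep_nonzero, hO, hlinj, hno4⟩
  obtain ⟨F, hF0, hFhom, hF⟩ := MvPolynomial.exists_isHomogeneous_forall_notMem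
    (W := fun s : {s : Finset (Fin 5) // s.sup ℓ ≠ ⊤} => s.1.sup ℓ) fun s => s.2
  refine ⟨F, hF0, hFhom, fun x hx L hL hker => ?_⟩
  set u := L O.rep
  have hπ : LinearMap.ker ((ℂ ∙ u).mkQ ∘ₗ L) = ℂ ∙ O.rep ⊔ ℂ ∙ x.rep := by
    rw [LinearMap.ker_comp, ker_mkQ, ← Set.image_singleton, ← map_span, comap_map_eq, hker]
  obtain ⟨hU, P, hP, hpair, h4⟩ := hℓ.exists_points_of_map (by simp)
    (fun s hs => hF _ hx ⟨s, hs⟩) ((mkQ_surjective (ℂ ∙ u)).comp hL) hπ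
  obtain ⟨C, hC0, hCP, hC⟩ := exists_unique_conic_of_five_points hU hpair h4
  refine ⟨C.comp (ℂ ∙ u).mkQ, fun h0 => hC0 ?_,
    fun i => (forall_map_eq_zero_iff (hP i) C).2 (hCP i),
    fun w => by simp [(Quotient.mk_eq_zero _).2 (mem_span_singleton_self u)],
    fun Q' hQ'0 hQ' => ?_⟩
  · ext z
    obtain ⟨w, rfl⟩ := mkQ_surjective _ z
    exact congr($h0 w)
  have hcone := polar_eq_zero_of_iSup_eq_top (S := fun i => (ℓ i).map L)
    (fun i v hv => by obtain ⟨w, hw, rfl⟩ := mem_map.1 hv; exact hQ' i w hw)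
    (by rw [← Submodule.map_iSup, hnohyp, Submodule.map_top, LinearMap.range_eq_top.2 hL])
    (fun i => mem_map_of_mem (hO i))
  obtain ⟨C', rfl⟩ := exists_eq_comp_mkQ (hQ' 0 _ (hO 0)) hcone
  obtain ⟨c, rfl⟩ := hC C' fun i => (forall_map_eq_zero_iff (hP i) C').1 (hQ' i)
  exact ⟨c, fun hc => hQ'0 (by ext; simp [hc]), fun w => rfl⟩
end
end

section
/- Let X ⊂ ℙ¹ × ℙ² be the product D × B of a set D of d distinct points of ℙ¹ and a set B of b distinct points of ℙ². Embed ℙ¹ × ℙ² in ℙ⁵ via the Segre embedding and project from a general point of ℙ⁵ to ℙ⁴. Then the image Z of X in ℙ⁴ consists of bd distinct points, there are b pairwise skew lines each containing exactly d points of Z, and there are d planes each containing exactly b points of Z, with each line meeting each plane in exactly one point of Z. -/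
noncomputable section

/-- The underlying vector space of ℙ¹ over ℂ. -/
abbrev V2 : Type := Fin 2 → ℂ

/-- The underlying vector space of ℙ² over ℂ. -/
abbrev V3 : Type := Fin 3 → ℂ

/-- The underlying vector space of ℙ⁵ over ℂ. -/
abbrev V6 : Type := Fin 6 → ℂ

/-- The Segre map ℂ² × ℂ³ → ℂ⁶ inducing the Segre embedding ℙ¹ × ℙ² → ℙ⁵. -/
def segre (u : V2) (v : V3) : V6 :=
  ![u 0 * v 0, u 0 * v 1, u 0 * v 2, u 1 * v 0, u 1 * v 1, u 1 * v 2]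

/-- The image in ℙ⁴ (as a linear subspace of ℂ⁵) of the Segre line `ℙ¹ × {B i}`
under the projection `L`. -/
def lineOf (L : V6 →ₗ[ℂ] V5) (w : V3) : Submodule ℂ V5 :=
  Submodule.map L (Submodule.span ℂ (Set.range fun u : V2 => segre u w))

/-- The image in ℙ⁴ (as a linear subspace of ℂ⁵) of the Segre plane `{D j} × ℙ²`
under the projection `L`. -/
def planeOf (L : V6 →ₗ[ℂ] V5) (u : V2) : Submodule ℂ V5 :=
  Submodule.map L (Submodule.span ℂ (Set.range fun v : V3 => segre u v))

/-!
Let `P` span the kernel of the projection `L`. The Segre line over `w` and the Segre plane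
over `u` are the images of the linear maps `segre · w` and `segre u ·`, of dimensions 2 and 3;
two lines over non-proportional points meet only in `0`, and a line meets a plane exactly in
the span of their Segre point, because `segre u v = segre u' v'` forces proportional factors.
`L` preserves dimensions, intersections and incidences on every subspace `U ⊔ U'` that avoids
`P`. The sums of two lines, of a line and a plane, and the planes have dimension at most 5,
so they are proper, and `P` avoids all of them wherever the product of linear forms, one
vanishing on each, does not vanish.
-/

open Submodule Module MvPolynomial

section LinearFormPoly

variable {K σ : Type*} [Field K] [Fintype σ] [DecidableEq σ]

def linearFormPoly (φ : (σ → K) →ₗ[K] K) : MvPolynomial σ K :=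
  ∑ k, C (φ (Pi.single k 1)) * X k

lemma eval_linearFormPoly (φ : (σ → K) →ₗ[K] K) (x : σ → K) :
    eval x (linearFormPoly φ) = φ x := by
  conv_rhs => rw [pi_eq_sum_univ' x]
  simp [linearFormPoly, mul_comm]

lemma isHomogeneous_linearFormPoly (φ : (σ → K) →ₗ[K] K) :
    (linearFormPoly φ).IsHomogeneous 1 :=
  IsHomogeneous.sum _ _ _ fun k _ => isHomogeneous_C_mul_X _ k

lemma linearFormPoly_ne_zero {φ : (σ → K) →ₗ[K] K} (hφ : φ ≠ 0) : linearFormPoly φ ≠ 0 := by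
  contrapose! hφ
  exact LinearMap.ext fun x => by simpa [eval_linearFormPoly] using congrArg (eval x) hφ

theorem exists_isHomogeneous_notMem_of_eval_ne_zero {ι : Type*} [Fintype ι]
    (W : ι → Submodule K (σ → K)) (hW : ∀ i, W i ≠ ⊤) :
    ∃ F : MvPolynomial σ K, F ≠ 0 ∧ F.IsHomogeneous (Fintype.card ι) ∧
      ∀ P, eval P F ≠ 0 → ∀ i, P ∉ W i := by
  choose φ hφ hWφ using fun i => (W i).exists_le_ker_of_lt_top (hW i).lt_top
  refine ⟨∏ i, linearFormPoly (φ i),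
    Finset.prod_ne_zero_iff.mpr fun i _ => linearFormPoly_ne_zero (hφ i), ?_, ?_⟩
  · simpa using IsHomogeneous.prod Finset.univ _ (fun _ => 1)
      fun i _ => isHomogeneous_linearFormPoly (φ i)
  · intro P hP i hPi
    rw [map_prod, Finset.prod_ne_zero_iff] at hP
    exact hP i (Finset.mem_univ i) (by rw [eval_linearFormPoly]; exact hWφ i hPi)

end LinearFormPoly

section DisjointKer

variable {R V W : Type*} [Ring R] [AddCommGroup V] [Module R V] [AddCommGroup W] [Module R W]
  {L : V →ₗ[R] W} {U U' : Submodule R V}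

lemma mem_map_iff_of_disjoint_ker (h : Disjoint (U ⊔ U') (LinearMap.ker L)) {x : V}
    (hx : x ∈ U) : L x ∈ U'.map L ↔ x ∈ U' := by
  refine ⟨fun ⟨y, hy, hyx⟩ => ?_, mem_map_of_mem⟩
  have : y - x = 0 := LinearMap.disjoint_ker.mp h _
    (sub_mem (mem_sup_right hy) (mem_sup_left hx)) (by rw [map_sub, hyx, sub_self])
  rwa [← sub_eq_zero.mp this]

lemma map_inf_of_disjoint_ker (h : Disjoint (U ⊔ U') (LinearMap.ker L)) :
    (U ⊓ U').map L = U.map L ⊓ U'.map L := by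
  refine le_antisymm (map_inf_le L) ?_
  rintro _ ⟨⟨x, hx, rfl⟩, hx'⟩
  exact mem_map_of_mem ⟨hx, (mem_map_iff_of_disjoint_ker h hx).mp hx'⟩

lemma finrank_map_of_disjoint_ker (h : Disjoint U (LinearMap.ker L)) :
    finrank R (U.map L) = finrank R U := by
  rw [← LinearMap.range_domRestrict,
    LinearMap.finrank_range_of_inj (LinearMap.injective_domRestrict_iff.mpr h)]

end DisjointKer

lemma injective_span_singleton_of_separated {R M ι κ : Type*} [Semiring R] [AddCommMonoid M]
    [Module R M] {p : ι × κ → M} {S : ι → Submodule R M} {T : κ → Submodule R M}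
    (hS : ∀ x, p x ∈ S x.1) (hT : ∀ x, p x ∈ T x.2)
    (hS_sep : ∀ x i, p x ∈ S i → x.1 = i) (hT_sep : ∀ x j, p x ∈ T j → x.2 = j) :
    Function.Injective fun x => span R {p x} := by
  intro x y h
  have hmem : p y ∈ span R {p x} := by
    dsimp only at h
    exact h ▸ mem_span_singleton_self _
  exact Prod.ext (hS_sep y x.1 ((span_singleton_le_iff_mem _ _).mpr (hS x) hmem)).symm
    (hT_sep y x.2 ((span_singleton_le_iff_mem _ _).mpr (hT x) hmem)).symm

def segreBilin : V2 →ₗ[ℂ] V3 →ₗ[ℂ] V6 :=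
  LinearMap.mk₂ ℂ segre
    (fun u u' v => by ext k; fin_cases k <;> simp [segre] <;> ring)
    (fun c u v => by ext k; fin_cases k <;> simp [segre] <;> ring)
    (fun u v v' => by ext k; fin_cases k <;> simp [segre] <;> ring)
    (fun c u v => by ext k; fin_cases k <;> simp [segre] <;> ring)

lemma segre_apply_finProdFinEquiv (u : V2) (v : V3) (k : Fin 2) (m : Fin 3) :
    segre u v (finProdFinEquiv (k, m)) = u k * v m := by
  fin_cases k <;> fin_cases m <;> rfl

lemma mul_eq_mul_of_segre_eq {u u' : V2} {v v' : V3} (h : segre u v = segre u' v')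
    (k : Fin 2) (m : Fin 3) : u k * v m = u' k * v' m := by
  simpa only [segre_apply_finProdFinEquiv] using congrFun h (finProdFinEquiv (k, m))

lemma exists_eq_smul_left_of_segre_eq {u u' : V2} {v v' : V3} (h : segre u v = segre u' v')
    (hv : v ≠ 0) : ∃ c : ℂ, u = c • u' := by
  obtain ⟨m, hm⟩ := Function.ne_iff.mp hv
  refine ⟨v' m / v m, funext fun k => ?_⟩
  have hm : v m ≠ 0 := hm
  simp only [Pi.smul_apply, smul_eq_mul]
  field_simp
  linear_combination mul_eq_mul_of_segre_eq h k m

lemma exists_eq_smul_right_of_segre_eq {u u' : V2} {v v' : V3} (h : segre u v = segre u' v')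
    (hu : u ≠ 0) : ∃ c : ℂ, v = c • v' := by
  obtain ⟨k, hk⟩ := Function.ne_iff.mp hu
  refine ⟨u' k / u k, funext fun m => ?_⟩
  have hk : u k ≠ 0 := hk
  simp only [Pi.smul_apply, smul_eq_mul]
  field_simp
  linear_combination mul_eq_mul_of_segre_eq h k m

lemma segre_ne_zero {u : V2} {v : V3} (hu : u ≠ 0) (hv : v ≠ 0) : segre u v ≠ 0 := by
  intro h
  obtain ⟨c, hc⟩ := exists_eq_smul_left_of_segre_eq (h.trans (segreBilin.map_zero₂ v).symm) hv
  exact hu (by simpa using hc)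

def lineSpan (w : V3) : Submodule ℂ V6 := LinearMap.range (segreBilin.flip w)

def planeSpan (u : V2) : Submodule ℂ V6 := LinearMap.range (segreBilin u)

lemma segre_mem_lineSpan (u : V2) (w : V3) : segre u w ∈ lineSpan w := ⟨u, rfl⟩

lemma segre_mem_planeSpan (u : V2) (w : V3) : segre u w ∈ planeSpan u := ⟨w, rfl⟩

lemma lineOf_eq_map (L : V6 →ₗ[ℂ] V5) (w : V3) : lineOf L w = (lineSpan w).map L := by
  rw [lineOf, lineSpan, ← (LinearMap.range _).span_eq]
  rfl

lemma planeOf_eq_map (L : V6 →ₗ[ℂ] V5) (u : V2) : planeOf L u = (planeSpan u).map L := by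
  rw [planeOf, planeSpan, ← (LinearMap.range _).span_eq]
  rfl

lemma finrank_lineSpan {w : V3} (hw : w ≠ 0) : finrank ℂ (lineSpan w) = 2 := by
  refine (LinearMap.finrank_range_of_inj ?_).trans (finrank_fin_fun ℂ)
  refine (injective_iff_map_eq_zero _).mpr fun u hu => ?_
  obtain ⟨c, hc⟩ := exists_eq_smul_left_of_segre_eq (hu.trans (segreBilin.map_zero₂ w).symm) hw
  simpa using hc

lemma finrank_planeSpan {u : V2} (hu : u ≠ 0) : finrank ℂ (planeSpan u) = 3 := by
  refine (LinearMap.finrank_range_of_inj ?_).trans (finrank_fin_fun ℂ)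
  refine (injective_iff_map_eq_zero _).mpr fun v hv => ?_
  obtain ⟨c, hc⟩ := exists_eq_smul_right_of_segre_eq (hv.trans ((segreBilin u).map_zero).symm) hu
  simpa using hc

lemma lineSpan_inf_lineSpan {w w' : V3} (hww' : ∀ c : ℂ, w ≠ c • w') :
    lineSpan w ⊓ lineSpan w' = ⊥ := by
  refine eq_bot_iff.mpr ?_
  rintro _ ⟨⟨u, rfl⟩, u', hu'⟩
  by_cases hu : u = 0
  · simp [hu]
  · obtain ⟨c, hc⟩ := exists_eq_smul_right_of_segre_eq hu'.symm hu
    exact absurd hc (hww' c)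

lemma lineSpan_inf_planeSpan {u : V2} {w : V3} (hw : w ≠ 0) :
    lineSpan w ⊓ planeSpan u = span ℂ {segre u w} := by
  refine le_antisymm ?_ ((span_singleton_le_iff_mem _ _).mpr
    ⟨segre_mem_lineSpan u w, segre_mem_planeSpan u w⟩)
  rintro _ ⟨⟨u', rfl⟩, v, hv⟩
  obtain ⟨c, rfl⟩ := exists_eq_smul_left_of_segre_eq hv.symm hw
  exact mem_span_singleton.mpr ⟨c, (segreBilin.map_smul₂ c u w).symm⟩

section Projection

variable {L : V6 →ₗ[ℂ] V5}

lemma map_segre_ne_zero {u : V2} {w : V3} (hu : u ≠ 0) (hw : w ≠ 0)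
    (h : Disjoint (lineSpan w) (LinearMap.ker L)) : L (segre u w) ≠ 0 :=
  fun h0 => segre_ne_zero hu hw (LinearMap.disjoint_ker.mp h _ (segre_mem_lineSpan u w) h0)

lemma map_segre_mem_lineOf (L : V6 →ₗ[ℂ] V5) (u : V2) (w : V3) : L (segre u w) ∈ lineOf L w :=
  mem_map_of_mem (subset_span ⟨u, rfl⟩)

lemma map_segre_mem_planeOf (L : V6 →ₗ[ℂ] V5) (u : V2) (w : V3) : L (segre u w) ∈ planeOf L u :=
  mem_map_of_mem (subset_span ⟨w, rfl⟩)

lemma finrank_lineOf {w : V3} (hw : w ≠ 0) (h : Disjoint (lineSpan w) (LinearMap.ker L)) :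
    finrank ℂ (lineOf L w) = 2 := by
  rw [lineOf_eq_map, finrank_map_of_disjoint_ker h, finrank_lineSpan hw]

lemma finrank_planeOf {u : V2} (hu : u ≠ 0) (h : Disjoint (planeSpan u) (LinearMap.ker L)) :
    finrank ℂ (planeOf L u) = 3 := by
  rw [planeOf_eq_map, finrank_map_of_disjoint_ker h, finrank_planeSpan hu]

lemma lineOf_inf_lineOf {w w' : V3} (hww' : ∀ c : ℂ, w ≠ c • w')
    (h : Disjoint (lineSpan w ⊔ lineSpan w') (LinearMap.ker L)) :
    lineOf L w ⊓ lineOf L w' = ⊥ := by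
  rw [lineOf_eq_map, lineOf_eq_map, ← map_inf_of_disjoint_ker h, lineSpan_inf_lineSpan hww',
    Submodule.map_bot]

lemma finrank_lineOf_inf_planeOf {u : V2} {w : V3} (hu : u ≠ 0) (hw : w ≠ 0)
    (h : Disjoint (lineSpan w ⊔ planeSpan u) (LinearMap.ker L)) :
    finrank ℂ ↥(lineOf L w ⊓ planeOf L u) = 1 := by
  rw [lineOf_eq_map, planeOf_eq_map, ← map_inf_of_disjoint_ker h,
    finrank_map_of_disjoint_ker (h.mono_left (inf_le_left.trans le_sup_left)),
    lineSpan_inf_planeSpan hw, finrank_span_singleton (segre_ne_zero hu hw)]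

lemma exists_eq_smul_of_map_segre_mem_lineOf {u : V2} {w w' : V3} (hu : u ≠ 0)
    (h : Disjoint (lineSpan w' ⊔ lineSpan w) (LinearMap.ker L))
    (hmem : L (segre u w') ∈ lineOf L w) : ∃ c : ℂ, w' = c • w := by
  rw [lineOf_eq_map, mem_map_iff_of_disjoint_ker h (segre_mem_lineSpan u w')] at hmem
  obtain ⟨u', hu'⟩ := hmem
  exact exists_eq_smul_right_of_segre_eq hu'.symm hu

lemma exists_eq_smul_of_map_segre_mem_planeOf {u u' : V2} {w : V3} (hw : w ≠ 0)
    (h : Disjoint (lineSpan w ⊔ planeSpan u) (LinearMap.ker L))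
    (hmem : L (segre u' w) ∈ planeOf L u) : ∃ c : ℂ, u' = c • u := by
  rw [planeOf_eq_map, mem_map_iff_of_disjoint_ker h (segre_mem_lineSpan u' w)] at hmem
  obtain ⟨v, hv⟩ := hmem
  exact exists_eq_smul_left_of_segre_eq hv.symm hw

end Projection

/-- The diagonal pairs `(i, i)` stand for the lines `lineSpan (B i)` themselves. -/
def exceptionalSubspace {b d : ℕ} (B : Fin b → V3) (D : Fin d → V2) :
    (Fin b × Fin b) ⊕ (Fin b × Fin d) ⊕ Fin d → Submodule ℂ V6
  | .inl (i, i') => lineSpan (B i) ⊔ lineSpan (B i')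
  | .inr (.inl (i, j)) => lineSpan (B i) ⊔ planeSpan (D j)
  | .inr (.inr j) => planeSpan (D j)

lemma exceptionalSubspace_ne_top {b d : ℕ} (B : Fin b → V3) (D : Fin d → V2)
    (s : (Fin b × Fin b) ⊕ (Fin b × Fin d) ⊕ Fin d) :
    exceptionalSubspace B D s ≠ ⊤ := by
  have hline (w : V3) : finrank ℂ (lineSpan w) ≤ 2 :=
    (LinearMap.finrank_range_le _).trans_eq (finrank_fin_fun ℂ)
  have hplane (u : V2) : finrank ℂ (planeSpan u) ≤ 3 :=
    (LinearMap.finrank_range_le _).trans_eq (finrank_fin_fun ℂ)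
  suffices h : finrank ℂ (exceptionalSubspace B D s) ≤ 5 by
    intro htop
    rw [htop, finrank_top, finrank_fin_fun] at h
    omega
  rcases s with ⟨i, i'⟩ | ⟨i, j⟩ | j
  · exact (finrank_add_le_finrank_add_finrank _ _).trans
      (by linarith [hline (B i), hline (B i')])
  · exact (finrank_add_le_finrank_add_finrank _ _).trans
      (by linarith [hline (B i), hplane (D j)])
  · exact (hplane (D j)).trans (by norm_num)

theorem stmt_16_general (b d : ℕ)
    (D : Fin d → V2) (hD : ∀ j, D j ≠ 0)
    (hDdist : ∀ j j', j ≠ j' → ∀ c : ℂ, D j ≠ c • D j')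
    (B : Fin b → V3) (hB : ∀ i, B i ≠ 0)
    (hBdist : ∀ i i', i ≠ i' → ∀ c : ℂ, B i ≠ c • B i') :
    ∃ F : MvPolynomial (Fin 6) ℂ, F ≠ 0 ∧ (∃ n, F.IsHomogeneous n) ∧
      ∀ P : V6, P ≠ 0 → MvPolynomial.eval P F ≠ 0 →
        ∀ L : V6 →ₗ[ℂ] V5, Function.Surjective L →
          LinearMap.ker L = Submodule.span ℂ {P} →
          -- the b*d image points are well defined and distinct in ℙ⁴:
          (∀ i j, L (segre (D j) (B i)) ≠ 0) ∧
          Function.Injective (fun x : Fin b × Fin d =>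
            Submodule.span ℂ ({L (segre (D x.2) (B x.1))} : Set V5)) ∧
          -- the b lines, pairwise skew:
          (∀ i, Module.finrank ℂ (lineOf L (B i)) = 2) ∧
          (∀ i i', i ≠ i' → lineOf L (B i) ⊓ lineOf L (B i') = ⊥) ∧
          -- the d planes:
          (∀ j, Module.finrank ℂ (planeOf L (D j)) = 3) ∧
          -- each image point lies on its line and on its plane:
          (∀ i j, L (segre (D j) (B i)) ∈ lineOf L (B i) ∧
                  L (segre (D j) (B i)) ∈ planeOf L (D j)) ∧
          -- each line contains exactly the d points of Z with its index,
          -- and each plane exactly the b points of Z with its index: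
          (∀ i i' j, L (segre (D j) (B i')) ∈ lineOf L (B i) → i' = i) ∧
          (∀ j j' i, L (segre (D j') (B i)) ∈ planeOf L (D j) → j' = j) ∧
          -- each line meets each plane in exactly one point:
          (∀ i j, Module.finrank ℂ ↥(lineOf L (B i) ⊓ planeOf L (D j)) = 1) := by
  obtain ⟨F, hF0, hFhom, hFgen⟩ := exists_isHomogeneous_notMem_of_eval_ne_zero
    (exceptionalSubspace B D) (exceptionalSubspace_ne_top B D)
  refine ⟨F, hF0, ⟨_, hFhom⟩, fun P hP hFP L _ hker => ?_⟩
  have hdisj (s) : Disjoint (exceptionalSubspace B D s) (LinearMap.ker L) :=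
    hker ▸ (disjoint_span_singleton' hP).mpr (hFgen P hFP s)
  have hline (i) : Disjoint (lineSpan (B i)) (LinearMap.ker L) :=
    (hdisj (.inl (i, i))).mono_left le_sup_left
  have hmemLine (i i' j) (h : L (segre (D j) (B i')) ∈ lineOf L (B i)) : i' = i := by
    by_contra hne
    obtain ⟨c, hc⟩ := exists_eq_smul_of_map_segre_mem_lineOf (hD j) (hdisj (.inl (i', i))) h
    exact hBdist i' i hne c hc
  have hmemPlane (j j' i) (h : L (segre (D j') (B i)) ∈ planeOf L (D j)) : j' = j := by
    by_contra hne
    obtain ⟨c, hc⟩ := exists_eq_smul_of_map_segre_mem_planeOf (hB i) (hdisj (.inr (.inl (i, j)))) h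
    exact hDdist j' j hne c hc
  refine ⟨fun i j => map_segre_ne_zero (hD j) (hB i) (hline i),
    injective_span_singleton_of_separated (fun x => map_segre_mem_lineOf L _ _)
      (fun x => map_segre_mem_planeOf L _ _) (fun x i => hmemLine i x.1 x.2)
      (fun x j => hmemPlane j x.2 x.1),
    fun i => finrank_lineOf (hB i) (hline i),
    fun i i' hne => lineOf_inf_lineOf (hBdist i i' hne) (hdisj (.inl (i, i'))),
    fun j => finrank_planeOf (hD j) (hdisj (.inr (.inr j))),
    fun i j => ⟨map_segre_mem_lineOf L _ _, map_segre_mem_planeOf L _ _⟩, hmemLine, hmemPlane,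
    fun i j => finrank_lineOf_inf_planeOf (hD j) (hB i) (hdisj (.inr (.inl (i, j))))⟩

/-- Let `X ⊂ ℙ¹ × ℙ²` be the product `D × B` of a set `D` of `d` distinct points of ℙ¹
and a set `B` of `b` distinct points of ℙ².  Embed `ℙ¹ × ℙ²` in ℙ⁵ via the Segre
embedding and project from a general point of ℙ⁵ (any point of a nonempty Zariski-open
set) to ℙ⁴.  Then the image `Z` of `X` in ℙ⁴ consists of `b*d` distinct points, there
are `b` pairwise skew lines each containing exactly `d` points of `Z`, and there are `d`
planes each containing exactly `b` points of `Z`, with each line meeting each plane in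
exactly one point. -/
theorem stmt_16 (b d : ℕ) (hb : 1 ≤ b) (hd : 1 ≤ d)
    (D : Fin d → V2) (hD : ∀ j, D j ≠ 0)
    (hDdist : ∀ j j', j ≠ j' → ∀ c : ℂ, D j ≠ c • D j')
    (B : Fin b → V3) (hB : ∀ i, B i ≠ 0)
    (hBdist : ∀ i i', i ≠ i' → ∀ c : ℂ, B i ≠ c • B i') :
    ∃ F : MvPolynomial (Fin 6) ℂ, F ≠ 0 ∧ (∃ n, F.IsHomogeneous n) ∧
      ∀ P : V6, P ≠ 0 → MvPolynomial.eval P F ≠ 0 →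
        ∀ L : V6 →ₗ[ℂ] V5, Function.Surjective L →
          LinearMap.ker L = Submodule.span ℂ {P} →
          -- the b*d image points are well defined and distinct in ℙ⁴:
          (∀ i j, L (segre (D j) (B i)) ≠ 0) ∧
          Function.Injective (fun x : Fin b × Fin d =>
            Submodule.span ℂ ({L (segre (D x.2) (B x.1))} : Set V5)) ∧
          -- the b lines, pairwise skew:
          (∀ i, Module.finrank ℂ (lineOf L (B i)) = 2) ∧
          (∀ i i', i ≠ i' → lineOf L (B i) ⊓ lineOf L (B i') = ⊥) ∧
          -- the d planes:
          (∀ j, Module.finrank ℂ (planeOf L (D j)) = 3) ∧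
          -- each image point lies on its line and on its plane:
          (∀ i j, L (segre (D j) (B i)) ∈ lineOf L (B i) ∧
                  L (segre (D j) (B i)) ∈ planeOf L (D j)) ∧
          -- each line contains exactly the d points of Z with its index,
          -- and each plane exactly the b points of Z with its index:
          (∀ i i' j, L (segre (D j) (B i')) ∈ lineOf L (B i) → i' = i) ∧
          (∀ j j' i, L (segre (D j') (B i)) ∈ planeOf L (D j) → j' = j) ∧
          -- each line meets each plane in exactly one point:
          (∀ i j, Module.finrank ℂ ↥(lineOf L (B i) ⊓ planeOf L (D j)) = 1) :=
  stmt_16_general b d D hD hDdist B hB hBdist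
end
end

section
/- Let b ≥ 3 and d ≥ 2, let Λ be a plane in ℙ⁴ and λ a line with Λ ∩ λ = ∅. Let L₁,…,L_d be distinct lines in Λ, P₁,…,P_d distinct points on λ, and A_i the plane spanned by L_i and P_i. Let B ⊂ Λ be a curve of degree b−1 meeting L₁ ∪ … ∪ L_d in exactly d(b−1) distinct points none equal to any point of λ, and assume λ meets each A_i only at P_i and is not contained in any A_i. Set S = A₁ ∪ … ∪ A_d and C = B ∪ λ. Then the set-theoretic intersection C ∩ S consists of exactly bd = (deg C)(deg S) points. -/
noncomputable section

/-- Let `b ≥ 3` and `d ≥ 2`, let `Λ` be a plane in ℙ⁴ and `lam` a line with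
`Λ ∩ lam = ∅`.  Let `L₁,…,L_d` be distinct lines in `Λ`, `P₁,…,P_d` distinct points on
`lam`, and `A_i` the plane spanned by `L_i` and `P_i`.  Let `B ⊂ Λ` be a curve of degree
`b−1` (an infinite set of points of `Λ` meeting every line of `Λ` not containing it in
at most `b-1` points) meeting `L₁ ∪ … ∪ L_d` in exactly `d(b−1)` distinct points, none
equal to any point of `lam`; assume `lam` meets each `A_i` only at `P_i` (and in
particular is not contained in any `A_i`).  Set `S = A₁ ∪ … ∪ A_d` and `C = B ∪ lam`.
Then the set-theoretic intersection `C ∩ S` consists of exactly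
`b*d = (deg C)(deg S)` points. -/
theorem stmt_19 (b d : ℕ) (hb : 3 ≤ b) (hd : 2 ≤ d)
    (Λ : Submodule ℂ V5) (hΛ : Module.finrank ℂ Λ = 3)
    (lam : Submodule ℂ V5) (hlam : Module.finrank ℂ lam = 2)
    (hdisj : Λ ⊓ lam = ⊥)
    (L : Fin d → Submodule ℂ V5) (hL : ∀ i, L i ≤ Λ)
    (hLdim : ∀ i, Module.finrank ℂ (L i) = 2) (hLinj : Function.Injective L)
    (P : Fin d → P4) (hP : ∀ i, (P i).rep ∈ lam) (hPinj : Function.Injective P)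
    (A : Fin d → Submodule ℂ V5)
    (hA : ∀ i, A i = L i ⊔ Submodule.span ℂ {(P i).rep})
    (hlamA : ∀ i, lam ⊓ A i = Submodule.span ℂ {(P i).rep})
    (B : Set P4) (hBΛ : ∀ x ∈ B, Projectivization.rep x ∈ Λ) (hBinf : B.Infinite)
    (hBdeg : ∀ W : Submodule ℂ V5, W ≤ Λ → Module.finrank ℂ W = 2 →
        ¬ B ⊆ {x : P4 | x.rep ∈ W} →
        (B ∩ {x : P4 | x.rep ∈ W}).Finite ∧ (B ∩ {x : P4 | x.rep ∈ W}).ncard ≤ b - 1)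
    (hBL : (B ∩ {x : P4 | ∃ i, x.rep ∈ L i}).Finite ∧
        (B ∩ {x : P4 | ∃ i, x.rep ∈ L i}).ncard = d * (b - 1))
    (hBlam : ∀ x ∈ B, Projectivization.rep x ∉ lam) :
    ((B ∪ {x : P4 | x.rep ∈ lam}) ∩ {x : P4 | ∃ i, x.rep ∈ A i}).Finite ∧
    ((B ∪ {x : P4 | x.rep ∈ lam}) ∩ {x : P4 | ∃ i, x.rep ∈ A i}).ncard = b * d := by
  have key : (B ∪ {x : P4 | x.rep ∈ lam}) ∩ {x : P4 | ∃ i, x.rep ∈ A i}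
      = (B ∩ {x : P4 | ∃ i, x.rep ∈ L i}) ∪ Set.range P := by
    ext x
    constructor
    · rintro ⟨hxC, i, hxA⟩
      rcases hxC with hxB | hxlam
      · left
        refine ⟨hxB, i, ?_⟩
        rw [hA i] at hxA
        rcases Submodule.mem_sup.mp hxA with ⟨y, hy, z, hz, hyz⟩
        have hzlam : z ∈ lam := by
          have : Submodule.span ℂ {(P i).rep} ≤ lam :=
            Submodule.span_le.mpr (by simpa using hP i)
          exact this hz
        have hzΛ : z ∈ Λ := by
          have hxΛ : x.rep ∈ Λ := hBΛ x hxB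
          have : z = x.rep - y := by rw [← hyz]; ring
          rw [this]
          exact Submodule.sub_mem _ hxΛ (hL i hy)
        have hz0 : z = 0 := by
          have : z ∈ Λ ⊓ lam := ⟨hzΛ, hzlam⟩
          rwa [hdisj, Submodule.mem_bot] at this
        rw [hz0, add_zero] at hyz
        rwa [← hyz]
      · right
        have hxspan : x.rep ∈ Submodule.span ℂ {(P i).rep} := by
          rw [← hlamA i]; exact ⟨hxlam, hxA⟩
        rcases Submodule.mem_span_singleton.mp hxspan with ⟨c, hc⟩
        have hc0 : c ≠ 0 := by
          rintro rfl
          exact x.rep_nonzero (by simpa using hc.symm)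
        refine ⟨i, ?_⟩
        have := Projectivization.mk_rep x
        rw [← this, ← Projectivization.mk_rep (P i)]
        rw [Projectivization.mk_eq_mk_iff]
        refine ⟨Units.mk0 c⁻¹ (inv_ne_zero hc0), ?_⟩
        rw [Units.smul_def, Units.val_mk0, ← hc, smul_smul, inv_mul_cancel₀ hc0, one_smul]
    · rintro (⟨hxB, i, hxL⟩ | ⟨i, rfl⟩)
      · exact ⟨Or.inl hxB, i, by rw [hA i]; exact Submodule.mem_sup_left hxL⟩
      · refine ⟨Or.inr (hP i), i, ?_⟩
        rw [hA i]
        exact Submodule.mem_sup_right (Submodule.mem_span_singleton_self _)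
  have hrange : (Set.range P).Finite := Set.finite_range P
  have hdisj2 : Disjoint (B ∩ {x : P4 | ∃ i, x.rep ∈ L i}) (Set.range P) := by
    rw [Set.disjoint_left]
    rintro x ⟨hxB, _⟩ ⟨i, rfl⟩
    exact hBlam _ hxB (hP i)
  have hfin : ((B ∩ {x : P4 | ∃ i, x.rep ∈ L i}) ∪ Set.range P).Finite :=
    hBL.1.union hrange
  rw [key]
  refine ⟨hfin, ?_⟩
  rw [Set.ncard_union_eq hdisj2 hBL.1 hrange, hBL.2]
  have : (Set.range P).ncard = d := by
    rw [← Set.image_univ, Set.ncard_image_of_injective _ hPinj, Set.ncard_univ,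
      Nat.card_eq_fintype_card, Fintype.card_fin]
  rw [this]
  obtain ⟨b', rfl⟩ := Nat.exists_eq_add_of_le hb
  have h1 : 3 + b' - 1 = 2 + b' := by omega
  rw [h1]
  ring
end
end
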